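/- arXiv:1105.4212 — 2 statements merged into one kernel-verified Lean document; each statement's English description precedes it below -/
import Mathlib

section
/- Let n ≥ 9 and let m satisfy n−m > m ≥ 4. Then there exist two distinct standard composition tableaux of shape (n−m, m) both having descent set {2, 5, n−m+3}; hence S_{(n−m,m)} is not F-multiplicity free. -/
/-- `SCTChain α U`: the filling `U` of the diagram of the composition `α`
(cells `0`-indexed, rows numbered from the top) arises from a saturated chain
in the poset `L_C` of compositions, where at each cover step either a new
part `1` is prepended or the leftmost part of a given size is increased by
`1`, and the cell created at the step reaching a composition of size `s` is
filled with `s`. -/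
inductive SCTChain : List ℕ → ((ℕ × ℕ) → ℕ) → Prop
  | nil : SCTChain [] (fun _ => 0)
  | prepend {β : List ℕ} {U : (ℕ × ℕ) → ℕ} (h : SCTChain β U) :
      SCTChain (1 :: β)
        (fun c => if c = (0, 0) then β.sum + 1
          else if c.1 = 0 then 0 else U (c.1 - 1, c.2))
  | grow {β : List ℕ} {U : (ℕ × ℕ) → ℕ} (h : SCTChain β U) (i : ℕ)
      (hi : i < β.length) (hleft : ∀ j < i, β.getD j 0 ≠ β.getD i 0) :
      SCTChain (β.set i (β.getD i 0 + 1))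
        (fun c => if c = (i, β.getD i 0) then β.sum + 1 else U c)

/-- `T` is a standard composition tableau of shape `α ⊨ n`: the filling of
the diagram of `α` obtained from a saturated chain
`∅ = α^{n+1} ⋖ ⋯ ⋖ α^1 = α` in `L_C` by placing entry `i` in the cell in
which `α^i` differs from `α^{i+1}` (so the cell created at the step reaching
size `s` receives the entry `n + 1 - s`); entries are `0` off the diagram. -/
def IsSCT (α : List ℕ) (T : (ℕ × ℕ) → ℕ) : Prop :=
  ∃ U, SCTChain α U ∧ T = fun c => if U c = 0 then 0 else α.sum + 1 - U c

/-- The descent set of a standard composition tableau: those `i` such that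
the entry `i+1` lies in a cell weakly to the right of the cell containing
`i`. -/
def desC (T : (ℕ × ℕ) → ℕ) : Set ℕ :=
  {i | 0 < i ∧ ∃ p q : ℕ × ℕ, T p = i ∧ T q = i + 1 ∧ p.2 ≤ q.2}

/-- `set(α) = {α₁, α₁+α₂, …, α₁+⋯+α_{ℓ(α)-1}}`, the subset of `[n-1]`
associated to a composition `α ⊨ n`; `com(T) = β` iff `desC T = compToSet β`. -/
def compToSet (α : List ℕ) : Set ℕ :=
  {s | ∃ i, 0 < i ∧ i < α.length ∧ s = (α.take i).sum}

/-- The quasisymmetric Schur function `S_α` is F-multiplicity free iff all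
standard composition tableaux of shape `α` have pairwise distinct descent
sets. -/
def FmfSCT (α : List ℕ) : Prop :=
  ∀ T T', IsSCT α T → IsSCT α T' → desC T = desC T' → T = T'

/-! Write the shape as `(b+d+5, b+4)`, so that `n = 2b+d+9`. Fill the first `b+d+3` cells of the
top row with `b+d+8, …, 6` and the first `b+1` cells of the bottom row with `n, …, b+d+9`; the
five remaining cells receive `1, …, 5`, either as top tail `3 1` and bottom tail `5 4 2`, or as
top tail `4 3` and bottom tail `5 2 1`. Both fillings come from saturated chains in `L_C` (grow
the bottom block, then the top block, then the five cells in decreasing order of their entries),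
and in both the only descents are `2`, `5` and `b+d+8 = n-m+3`. -/

namespace SCTChain

variable {U : ℕ × ℕ → ℕ}

theorem grow_head {x : ℕ} {l : List ℕ} (h : SCTChain (x :: l) U) :
    SCTChain ((x + 1) :: l) (Function.update U (0, x) ((x :: l).sum + 1)) := by
  convert h.grow 0 (by simp) (by simp) using 1
  · simp
  · funext c
    simp [Function.update_apply]

theorem grow_second {x y : ℕ} {l : List ℕ} (h : SCTChain (x :: y :: l) U) (hxy : x ≠ y) :
    SCTChain (x :: (y + 1) :: l) (Function.update U (1, y) ((x :: y :: l).sum + 1)) := by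
  convert h.grow 1 (by simp) (by simpa using hxy) using 1
  · simp
  · funext c
    simp [Function.update_apply]

theorem single_row (a : ℕ) :
    SCTChain [a + 1] (fun c => if c.1 = 0 ∧ c.2 ≤ a then c.2 + 1 else 0) := by
  induction a with
  | zero =>
    convert SCTChain.nil.prepend using 1
    funext ⟨i, j⟩
    simp only [Prod.mk.injEq, List.sum_nil]
    split_ifs <;> omega
  | succ a ih =>
    convert ih.grow_head using 1
    funext ⟨i, j⟩
    simp only [Function.update_apply, Prod.mk.injEq, List.sum_cons, List.sum_nil]
    split_ifs <;> omega

theorem two_rows (a t : ℕ) :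
    SCTChain [t + 1, a + 1] (fun c =>
      if c.1 = 0 ∧ c.2 ≤ t then a + 2 + c.2 else if c.1 = 1 ∧ c.2 ≤ a then c.2 + 1 else 0) := by
  induction t with
  | zero =>
    convert (single_row a).prepend using 1
    funext ⟨i, j⟩
    simp only [Prod.mk.injEq, List.sum_cons, List.sum_nil]
    split_ifs <;> omega
  | succ t ih =>
    convert ih.grow_head using 1
    funext ⟨i, j⟩
    simp only [Function.update_apply, Prod.mk.injEq, List.sum_cons, List.sum_nil]
    split_ifs <;> omega

end SCTChain

def twoRowFilling (b d e₁ e₂ f₁ f₂ f₃ : ℕ) (c : ℕ × ℕ) : ℕ :=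
  if c.1 = 0 then
    if c.2 ≤ b + d + 2 then b + d + 8 - c.2
    else if c.2 = b + d + 3 then e₁ else if c.2 = b + d + 4 then e₂ else 0
  else if c.1 = 1 then
    if c.2 ≤ b then 2 * b + d + 9 - c.2
    else if c.2 = b + 1 then f₁ else if c.2 = b + 2 then f₂ else if c.2 = b + 3 then f₃ else 0
  else 0

theorem twoRowFilling_cases_of_pos {b d e₁ e₂ f₁ f₂ f₃ i j v : ℕ}
    (h : twoRowFilling b d e₁ e₂ f₁ f₂ f₃ (i, j) = v) (hv : 0 < v) :
    (i = 0 ∧ j ≤ b + d + 2 ∧ v = b + d + 8 - j) ∨ (i = 0 ∧ j = b + d + 3 ∧ v = e₁) ∨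
    (i = 0 ∧ j = b + d + 4 ∧ v = e₂) ∨ (i = 1 ∧ j ≤ b ∧ v = 2 * b + d + 9 - j) ∨
    (i = 1 ∧ j = b + 1 ∧ v = f₁) ∨ (i = 1 ∧ j = b + 2 ∧ v = f₂) ∨
    (i = 1 ∧ j = b + 3 ∧ v = f₃) := by
  subst h
  unfold twoRowFilling at hv ⊢
  split_ifs at hv ⊢ <;> simp_all

def tableauA (b d : ℕ) : ℕ × ℕ → ℕ := twoRowFilling b d 3 1 5 4 2

def tableauB (b d : ℕ) : ℕ × ℕ → ℕ := twoRowFilling b d 4 3 5 2 1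

theorem isSCT_tableauA (b d : ℕ) : IsSCT [b + d + 5, b + 4] (tableauA b d) := by
  have hchain := (SCTChain.two_rows b (b + d + 2)).grow_second (by omega)
    |>.grow_second (by omega) |>.grow_head |>.grow_second (by omega) |>.grow_head
  refine ⟨_, hchain, ?_⟩
  funext ⟨i, j⟩
  simp only [tableauA, twoRowFilling, Function.update_apply, Prod.mk.injEq, List.sum_cons,
    List.sum_nil]
  rcases i with _ | _ | i <;> grind

theorem isSCT_tableauB (b d : ℕ) : IsSCT [b + d + 5, b + 4] (tableauB b d) := by
  have hchain := (SCTChain.two_rows b (b + d + 2)).grow_second (by omega)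
    |>.grow_head |>.grow_head |>.grow_second (by omega) |>.grow_second (by omega)
  refine ⟨_, hchain, ?_⟩
  funext ⟨i, j⟩
  simp only [tableauB, twoRowFilling, Function.update_apply, Prod.mk.injEq, List.sum_cons,
    List.sum_nil]
  rcases i with _ | _ | i <;> grind

theorem desC_tableauA (b d : ℕ) : desC (tableauA b d) = {2, 5, b + d + 8} := by
  ext k
  simp only [Set.mem_insert_iff, Set.mem_singleton_iff]
  constructor
  · rintro ⟨hk, ⟨i, j⟩, ⟨i', j'⟩, hp, hq, hle⟩
    unfold tableauA at hp hq
    rcases twoRowFilling_cases_of_pos hp hk with h | h | h | h | h | h | h <;>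
    rcases twoRowFilling_cases_of_pos hq k.succ_pos with h' | h' | h' | h' | h' | h' | h' <;>
    simp only at hle <;> omega
  · rintro (rfl | rfl | rfl)
    · exact ⟨by norm_num, (1, b + 3), (0, b + d + 3), by simp [tableauA, twoRowFilling],
        by simp [tableauA, twoRowFilling], by dsimp only; omega⟩
    · exact ⟨by norm_num, (1, b + 1), (0, b + d + 2), by simp [tableauA, twoRowFilling],
        by simp [tableauA, twoRowFilling], by dsimp only; omega⟩
    · exact ⟨by norm_num, (0, 0), (1, b), by simp [tableauA, twoRowFilling],
        by simp [tableauA, twoRowFilling]; omega, by dsimp only; omega⟩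

theorem desC_tableauB (b d : ℕ) : desC (tableauB b d) = {2, 5, b + d + 8} := by
  ext k
  simp only [Set.mem_insert_iff, Set.mem_singleton_iff]
  constructor
  · rintro ⟨hk, ⟨i, j⟩, ⟨i', j'⟩, hp, hq, hle⟩
    unfold tableauB at hp hq
    rcases twoRowFilling_cases_of_pos hp hk with h | h | h | h | h | h | h <;>
    rcases twoRowFilling_cases_of_pos hq k.succ_pos with h' | h' | h' | h' | h' | h' | h' <;>
    simp only at hle <;> omega
  · rintro (rfl | rfl | rfl)
    · exact ⟨by norm_num, (1, b + 2), (0, b + d + 4), by simp [tableauB, twoRowFilling],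
        by simp [tableauB, twoRowFilling], by dsimp only; omega⟩
    · exact ⟨by norm_num, (1, b + 1), (0, b + d + 2), by simp [tableauB, twoRowFilling],
        by simp [tableauB, twoRowFilling], by dsimp only; omega⟩
    · exact ⟨by norm_num, (0, 0), (1, b), by simp [tableauB, twoRowFilling],
        by simp [tableauB, twoRowFilling]; omega, by dsimp only; omega⟩

theorem tableauA_ne_tableauB (b d : ℕ) : tableauA b d ≠ tableauB b d := fun h => by
  simpa [tableauA, tableauB, twoRowFilling] using congr_fun h (0, b + d + 3)

theorem qs_nm_m_multiplicity_general (n m : ℕ) (hm : 4 ≤ m)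
    (hmn : m < n - m) :
    (∃ T T', IsSCT [n - m, m] T ∧ IsSCT [n - m, m] T' ∧ T ≠ T' ∧
      desC T = {2, 5, n - m + 3} ∧ desC T' = {2, 5, n - m + 3}) ∧
    ¬ FmfSCT [n - m, m] := by
  obtain ⟨b, rfl⟩ : ∃ b, m = b + 4 := ⟨m - 4, by omega⟩
  obtain ⟨d, hd⟩ : ∃ d, n - (b + 4) = b + d + 5 := ⟨n - 2 * b - 9, by omega⟩
  rw [hd]
  have hA := isSCT_tableauA b d
  have hB := isSCT_tableauB b d
  have hAB := tableauA_ne_tableauB b d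
  have hdes := (desC_tableauA b d).trans (desC_tableauB b d).symm
  exact ⟨⟨_, _, hA, hB, hAB, desC_tableauA b d, desC_tableauB b d⟩,
    fun hfree => hAB (hfree _ _ hA hB hdes)⟩

/-- For `n ≥ 9` and `n-m > m ≥ 4` there are two distinct standard
composition tableaux of shape `(n-m, m)` both having descent set
`{2, 5, n-m+3}`; hence `S_{(n-m,m)}` is not F-multiplicity free. -/
theorem qs_nm_m_multiplicity (n m : ℕ) (hn : 9 ≤ n) (hm : 4 ≤ m)
    (hmn : m < n - m) :
    (∃ T T', IsSCT [n - m, m] T ∧ IsSCT [n - m, m] T' ∧ T ≠ T' ∧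
      desC T = {2, 5, n - m + 3} ∧ desC T' = {2, 5, n - m + 3}) ∧
    ¬ FmfSCT [n - m, m] :=
  qs_nm_m_multiplicity_general n m hm hmn
end

section
/- Let n ≥ 10 and let m satisfy n−m > m ≥ 4. Then there exist two distinct standard composition tableaux of shape (m, n−m) both having descent set {2, 5, n−m+2}; hence S_{(m,n−m)} is not F-multiplicity free. -/
theorem List.sum_set_getD_add_one {β : List ℕ} {i : ℕ} (hi : i < β.length) :
    (β.set i (β.getD i 0 + 1)).sum = β.sum + 1 := by
  induction β generalizing i with
  | nil => simp at hi
  | cons b β ih =>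
    cases i with
    | zero => simp; omega
    | succ i =>
      have := ih (i := i) (by simpa using hi)
      simp only [List.set_cons_succ, List.getD_cons_succ, List.sum_cons] at this ⊢
      omega

theorem List.getD_le_getD_set_add_one (β : List ℕ) (i j : ℕ) :
    β.getD j 0 ≤ (β.set i (β.getD i 0 + 1)).getD j 0 := by
  simp only [List.getD_eq_getElem?_getD, List.getElem?_set]
  split_ifs with h h'
  · subst h; simp [List.getElem?_eq_getElem h']
  · simp_all
  · rfl

namespace SCTChain

variable {α : List ℕ} {U : ℕ × ℕ → ℕ}

theorem apply_le_sum (h : SCTChain α U) (c : ℕ × ℕ) : U c ≤ α.sum := by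
  induction h generalizing c with
  | nil => simp
  | prepend _ ih =>
    simp only [List.sum_cons]
    split_ifs
    · omega
    · omega
    · have := ih (c.1 - 1, c.2); omega
  | grow _ i hi _ ih =>
    rw [List.sum_set_getD_add_one hi]
    dsimp only
    split_ifs
    · rfl
    · have := ih c; omega

theorem lt_getD_of_ne_zero (h : SCTChain α U) {c : ℕ × ℕ} (hc : U c ≠ 0) :
    c.2 < α.getD c.1 0 := by
  induction h generalizing c with
  | nil => simp at hc
  | prepend _ ih =>
    obtain ⟨i, j⟩ := c
    simp only [Prod.mk.injEq] at hc
    split_ifs at hc with h0 h1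
    · simp [h0.1, h0.2]
    · exact absurd rfl hc
    · obtain ⟨i, rfl⟩ := Nat.exists_eq_succ_of_ne_zero h1
      simpa using ih hc
  | grow _ i _ _ ih =>
    dsimp only at hc
    split_ifs at hc with hnew
    · subst hnew; simp_all [List.getD_eq_getElem?_getD]
    · exact (ih hc).trans_le (List.getD_le_getD_set_add_one _ _ _)

theorem eq_of_apply_eq (h : SCTChain α U) {p q : ℕ × ℕ} (hpq : U p = U q) (hp : U p ≠ 0) :
    p = q := by
  induction h generalizing p q with
  | nil => simp at hp
  | prepend hβ ih =>
    obtain ⟨i, j⟩ := p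
    obtain ⟨i', j'⟩ := q
    have h1 := hβ.apply_le_sum (i - 1, j)
    have h2 := hβ.apply_le_sum (i' - 1, j')
    simp only [Prod.mk.injEq] at hpq hp ⊢
    split_ifs at hpq hp
    all_goals first | omega | have := ih hpq hp; simp only [Prod.mk.injEq] at this; omega
  | grow hβ i _ _ ih =>
    have h1 := hβ.apply_le_sum p
    have h2 := hβ.apply_le_sum q
    dsimp only at hpq hp
    split_ifs at hpq hp with ha hb hb
    · rw [ha, hb]
    all_goals first | omega | exact ih hpq hp

end SCTChain

/-- `cell s` is the cell created at step `s` of a saturated chain in `L_C` ending at `α`. -/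
def IsStepCells (α : List ℕ) (cell : ℕ → ℕ × ℕ) : Prop :=
  ∃ U, SCTChain α U ∧ ∀ s, 1 ≤ s → s ≤ α.sum → U (cell s) = s

namespace IsStepCells

variable {β : List ℕ} {cell : ℕ → ℕ × ℕ}

theorem nil : IsStepCells [] cell :=
  ⟨_, .nil, fun s h1 h2 => by simp at h2; omega⟩

theorem prepend {cell' : ℕ → ℕ × ℕ} (h : IsStepCells β cell')
    (hshift : ∀ s, 1 ≤ s → s ≤ β.sum → cell s = ((cell' s).1 + 1, (cell' s).2))
    (hnew : cell (β.sum + 1) = (0, 0)) : IsStepCells (1 :: β) cell := by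
  obtain ⟨U, hU, hcell⟩ := h
  refine ⟨_, hU.prepend, fun s h1 h2 => ?_⟩
  simp only [List.sum_cons] at h2
  rcases Nat.lt_or_ge s (β.sum + 1) with hs | hs
  · rw [hshift s h1 (by omega)]
    simp [hcell s h1 (by omega)]
  · obtain rfl : s = β.sum + 1 := by omega
    simp [hnew]

theorem grow (h : IsStepCells β cell) {i : ℕ} (hi : i < β.length)
    (hleft : ∀ j < i, β.getD j 0 ≠ β.getD i 0) (hnew : cell (β.sum + 1) = (i, β.getD i 0)) :
    IsStepCells (β.set i (β.getD i 0 + 1)) cell := by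
  obtain ⟨U, hU, hcell⟩ := h
  refine ⟨_, hU.grow i hi hleft, fun s h1 h2 => ?_⟩
  rw [List.sum_set_getD_add_one hi] at h2
  rcases Nat.lt_or_ge s (β.sum + 1) with hs | hs
  · have hold : cell s ≠ (i, β.getD i 0) := fun heq => by
      have := hU.lt_getD_of_ne_zero (c := cell s) (by rw [hcell s h1 (by omega)]; omega)
      simp [heq] at this
    simp only [if_neg hold, hcell s h1 (by omega)]
  · obtain rfl : s = β.sum + 1 := by omega
    simp [hnew]

theorem grow_head_run {a a' : ℕ} (h : IsStepCells (a :: β) cell) (ha : a ≤ a')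
    (hnew : ∀ s, a + β.sum < s → s ≤ a' + β.sum → cell s = (0, s - β.sum - 1)) :
    IsStepCells (a' :: β) cell := by
  obtain ⟨t, rfl⟩ := Nat.exists_eq_add_of_le ha
  induction t with
  | zero => exact h
  | succ t ih =>
    have h' := (ih (by omega) fun s h1 h2 => hnew s h1 (by omega)).grow (i := 0) (by simp)
      (by simp) (by rw [hnew _ (by simp) (by simp)]; simp; omega)
    simpa [Nat.add_assoc] using h'

theorem grow_second_run {a b b' : ℕ} (h : IsStepCells [a, b] cell) (hb : b ≤ b')
    (hleft : ∀ s, b ≤ s → s < b' → a ≠ s)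
    (hnew : ∀ s, a + b < s → s ≤ a + b' → cell s = (1, s - a - 1)) :
    IsStepCells [a, b'] cell := by
  obtain ⟨t, rfl⟩ := Nat.exists_eq_add_of_le hb
  induction t with
  | zero => exact h
  | succ t ih =>
    have h' := (ih (by omega) (fun s h1 h2 => hleft s h1 (by omega))
      fun s h1 h2 => hnew s h1 (by omega)).grow (i := 1) (by simp)
      (by intro j hj; obtain rfl : j = 0 := by omega
          simpa using hleft (b + t) (by omega) (by omega))
      (by rw [hnew _ (by simp) (by simp)]; simp; omega)
    simpa [Nat.add_assoc] using h'

theorem start {a : ℕ} (ha : 0 < a) (hrow : ∀ s, 1 ≤ s → s ≤ a → cell s = (1, s - 1))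
    (hnew : cell (a + 1) = (0, 0)) : IsStepCells [1, a] cell := by
  have hone : IsStepCells [1] (fun s => (0, s - 1)) :=
    (nil (cell := fun _ => (0, 0))).prepend (fun s h1 h2 => by simp at h2; omega) (by simp)
  have hsingle : IsStepCells [a] (fun s => (0, s - 1)) :=
    hone.grow_head_run ha (fun s _ _ => by simp)
  exact hsingle.prepend (fun s h1 h2 => by simpa using hrow s h1 (by simpa using h2))
    (by simpa using hnew)

end IsStepCells

theorem desC_eq_of_apply_eq_iff {T : ℕ × ℕ → ℕ} {N : ℕ} {pos : ℕ → ℕ × ℕ}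
    (hT : ∀ c i, 0 < i → (T c = i ↔ i ≤ N ∧ c = pos i)) :
    desC T = {i | 0 < i ∧ i < N ∧ (pos i).2 ≤ (pos (i + 1)).2} := by
  ext i
  simp only [desC, Set.mem_ofPred_eq]
  refine and_congr_right fun hi => ⟨?_, ?_⟩
  · rintro ⟨p, q, hp, hq, hpq⟩
    obtain ⟨-, rfl⟩ := (hT p i hi).1 hp
    obtain ⟨hiN, rfl⟩ := (hT q (i + 1) (by omega)).1 hq
    exact ⟨hiN, hpq⟩
  · rintro ⟨hiN, hcol⟩
    exact ⟨pos i, pos (i + 1), (hT _ i hi).2 ⟨hiN.le, rfl⟩,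
      (hT _ (i + 1) (by omega)).2 ⟨hiN, rfl⟩, hcol⟩

theorem ne_of_apply_eq_iff {T T' : ℕ × ℕ → ℕ} {N : ℕ} {pos pos' : ℕ → ℕ × ℕ}
    (hT : ∀ c i, 0 < i → (T c = i ↔ i ≤ N ∧ c = pos i))
    (hT' : ∀ c i, 0 < i → (T' c = i ↔ i ≤ N ∧ c = pos' i))
    {i : ℕ} (hi : 0 < i) (hiN : i ≤ N) (hne : pos i ≠ pos' i) : T ≠ T' := by
  rintro rfl
  exact hne ((hT' _ i hi).1 ((hT _ i hi).2 ⟨hiN, rfl⟩)).2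

theorem IsStepCells.exists_isSCT {α : List ℕ} {cell : ℕ → ℕ × ℕ} (h : IsStepCells α cell) :
    ∃ T, IsSCT α T ∧ ∀ c i, 0 < i → (T c = i ↔ i ≤ α.sum ∧ c = cell (α.sum + 1 - i)) := by
  obtain ⟨U, hU, hcell⟩ := h
  refine ⟨_, ⟨U, hU, rfl⟩, fun c i hi => ⟨fun hc => ?_, ?_⟩⟩
  · have hUc : U c ≠ 0 := by rintro h0; simp [h0] at hc; omega
    have := hU.apply_le_sum c
    simp only [if_neg hUc] at hc
    refine ⟨by omega, hU.eq_of_apply_eq ?_ hUc⟩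
    rw [hcell _ (by omega) (by omega)]
    omega
  · rintro ⟨hiN, rfl⟩
    rw [hcell (α.sum + 1 - i) (by omega) (by omega)]
    split_ifs <;> omega

def stepAscents (N : ℕ) (cell : ℕ → ℕ × ℕ) : Set ℕ :=
  {s | 1 ≤ s ∧ s < N ∧ (cell (s + 1)).2 ≤ (cell s).2}

theorem desC_eq_image_stepAscents {T : ℕ × ℕ → ℕ} {N : ℕ} {cell : ℕ → ℕ × ℕ}
    (hT : ∀ c i, 0 < i → (T c = i ↔ i ≤ N ∧ c = cell (N + 1 - i))) :
    desC T = (N - ·) '' stepAscents N cell := by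
  rw [desC_eq_of_apply_eq_iff hT]
  ext i
  simp only [stepAscents, Set.mem_ofPred_eq, Set.mem_image]
  constructor
  · rintro ⟨hi, hiN, hcol⟩
    refine ⟨N - i, ⟨by omega, by omega, ?_⟩, by omega⟩
    rwa [show N - i + 1 = N + 1 - i by omega, ← Nat.add_sub_add_right N 1 i]
  · rintro ⟨s, ⟨hs, hsN, hcol⟩, rfl⟩
    refine ⟨by omega, by omega, ?_⟩
    rwa [show N + 1 - (N - s) = s + 1 by omega, show N + 1 - (N - s + 1) = s by omega]

theorem not_fmfSCT_of_isStepCells {α : List ℕ} {cell cell' : ℕ → ℕ × ℕ} {A : Set ℕ}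
    (h : IsStepCells α cell) (h' : IsStepCells α cell') {s : ℕ} (hs : 1 ≤ s) (hsN : s ≤ α.sum)
    (hne : cell s ≠ cell' s) (hA : stepAscents α.sum cell = A)
    (hA' : stepAscents α.sum cell' = A) :
    (∃ T T', IsSCT α T ∧ IsSCT α T' ∧ T ≠ T' ∧
      desC T = (α.sum - ·) '' A ∧ desC T' = (α.sum - ·) '' A) ∧ ¬ FmfSCT α := by
  obtain ⟨T, hT, hTcell⟩ := h.exists_isSCT
  obtain ⟨T', hT', hT'cell⟩ := h'.exists_isSCT
  have hne' : T ≠ T' := ne_of_apply_eq_iff hTcell hT'cell (i := α.sum + 1 - s) (by omega)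
    (by omega) (by rwa [Nat.sub_sub_self (by omega)])
  have hdes : desC T = (α.sum - ·) '' A := hA ▸ desC_eq_image_stepAscents hTcell
  have hdes' : desC T' = (α.sum - ·) '' A := hA' ▸ desC_eq_image_stepAscents hT'cell
  exact ⟨⟨T, T', hT, hT', hne', hdes, hdes'⟩,
    fun hF => hne' (hF T T' hT hT' (hdes.trans hdes'.symm))⟩

def cellsA (m k s : ℕ) : ℕ × ℕ :=
  if s ≤ m - 2 then (1, s - 1)
  else if s ≤ 2 * m - 5 then (0, s - (m - 1))
  else if s ≤ m + k - 5 then (1, s - m + 2)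
  else if s = m + k - 4 then (0, m - 3)
  else if s ≤ m + k - 2 then (1, s - m + 1)
  else (0, s - k - 1)

def cellsB (m k s : ℕ) : ℕ × ℕ :=
  if s ≤ m - 2 then (1, s - 1)
  else if s ≤ 2 * m - 5 then (0, s - (m - 1))
  else if s ≤ m + k - 5 then (1, s - m + 2)
  else if s ≤ m + k - 3 then (0, s - k + 1)
  else if s = m + k - 2 then (1, k - 2)
  else if s = m + k - 1 then (0, m - 1)
  else (1, k - 1)

def cellsC (m k s : ℕ) : ℕ × ℕ :=
  if s ≤ m - 2 then (1, s - 1)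
  else if s ≤ 2 * m - 6 then (0, s - (m - 1))
  else if s ≤ m + k - 5 then (1, s - m + 3)
  else if s ≤ m + k - 3 then (0, s - k)
  else if s = m + k - 2 then (1, k - 1)
  else (0, s - k - 1)

section

variable {m k : ℕ}

theorem isStepCells_cellsA (hm : 4 ≤ m) (hk : m + 1 ≤ k) : IsStepCells [m, k] (cellsA m k) := by
  refine (((((IsStepCells.start (a := m - 2) ?_ ?_ ?_).grow_head_run (a' := m - 3) ?_ ?_
    ).grow_second_run (b' := k - 2) ?_ ?_ ?_).grow_head_run (a' := m - 2) ?_ ?_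
    ).grow_second_run (b' := k) ?_ ?_ ?_).grow_head_run ?_ ?_
  all_goals
    intros
    try simp only [cellsA, List.sum_cons, List.sum_nil] at *
    try split_ifs
    all_goals try simp only [Prod.mk.injEq, true_and]
    all_goals omega

theorem isStepCells_cellsB (hm : 4 ≤ m) (hk : m + 2 ≤ k) : IsStepCells [m, k] (cellsB m k) := by
  refine ((((((IsStepCells.start (a := m - 2) ?_ ?_ ?_).grow_head_run (a' := m - 3) ?_ ?_
    ).grow_second_run (b' := k - 2) ?_ ?_ ?_).grow_head_run (a' := m - 1) ?_ ?_
    ).grow_second_run (b' := k - 1) ?_ ?_ ?_).grow_head_run (a' := m) ?_ ?_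
    ).grow_second_run ?_ ?_ ?_
  all_goals
    intros
    try simp only [cellsB, List.sum_cons, List.sum_nil] at *
    try split_ifs
    all_goals try simp only [Prod.mk.injEq, true_and]
    all_goals omega

theorem isStepCells_cellsC (hm : 5 ≤ m) (hk : m + 1 ≤ k) : IsStepCells [m, k] (cellsC m k) := by
  refine (((((IsStepCells.start (a := m - 2) ?_ ?_ ?_).grow_head_run (a' := m - 4) ?_ ?_
    ).grow_second_run (b' := k - 1) ?_ ?_ ?_).grow_head_run (a' := m - 2) ?_ ?_
    ).grow_second_run (b' := k) ?_ ?_ ?_).grow_head_run ?_ ?_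
  all_goals
    intros
    try simp only [cellsC, List.sum_cons, List.sum_nil] at *
    try split_ifs
    all_goals try simp only [Prod.mk.injEq, true_and]
    all_goals omega

theorem stepAscents_cellsA (hm : 4 ≤ m) (hk : m + 1 ≤ k) :
    stepAscents [m, k].sum (cellsA m k) = {m - 2, m + k - 5, m + k - 2} := by
  ext s
  simp only [stepAscents, List.sum_cons, List.sum_nil, add_zero, Set.mem_ofPred_eq,
    Set.mem_insert_iff, Set.mem_singleton_iff]
  constructor
  · rintro ⟨hs, hsN, hcol⟩
    simp only [cellsA] at hcol
    split_ifs at hcol <;> omega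
  · rintro (rfl | rfl | rfl) <;> refine ⟨by omega, by omega, ?_⟩ <;>
      simp (disch := omega) only [cellsA, if_pos, if_neg] <;> omega

theorem stepAscents_cellsB (hm : 4 ≤ m) (hk : m + 2 ≤ k) :
    stepAscents [m, k].sum (cellsB m k) = {m - 2, m + k - 5, m + k - 2} := by
  ext s
  simp only [stepAscents, List.sum_cons, List.sum_nil, add_zero, Set.mem_ofPred_eq,
    Set.mem_insert_iff, Set.mem_singleton_iff]
  constructor
  · rintro ⟨hs, hsN, hcol⟩
    simp only [cellsB] at hcol
    split_ifs at hcol <;> omega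
  · rintro (rfl | rfl | rfl) <;> refine ⟨by omega, by omega, ?_⟩ <;>
      simp (disch := omega) only [cellsB, if_pos, if_neg, ↓reduceIte] <;> omega

theorem stepAscents_cellsC (hm : 5 ≤ m) (hk : m + 1 ≤ k) :
    stepAscents [m, k].sum (cellsC m k) = {m - 2, m + k - 5, m + k - 2} := by
  ext s
  simp only [stepAscents, List.sum_cons, List.sum_nil, add_zero, Set.mem_ofPred_eq,
    Set.mem_insert_iff, Set.mem_singleton_iff]
  constructor
  · rintro ⟨hs, hsN, hcol⟩
    simp only [cellsC] at hcol
    split_ifs at hcol <;> omega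
  · rintro (rfl | rfl | rfl) <;> refine ⟨by omega, by omega, ?_⟩ <;>
      simp (disch := omega) only [cellsC, if_pos, if_neg, ↓reduceIte] <;> omega

end

/-- For `n ≥ 10` and `n-m > m ≥ 4` there are two distinct standard
composition tableaux of shape `(m, n-m)` both having descent set
`{2, 5, n-m+2}`; hence `S_{(m,n-m)}` is not F-multiplicity free. -/
theorem qs_m_nm_multiplicity (n m : ℕ) (hn : 10 ≤ n) (hm : 4 ≤ m)
    (hmn : m < n - m) :
    (∃ T T', IsSCT [m, n - m] T ∧ IsSCT [m, n - m] T' ∧ T ≠ T' ∧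
      desC T = {2, 5, n - m + 2} ∧ desC T' = {2, 5, n - m + 2}) ∧
    ¬ FmfSCT [m, n - m] := by
  generalize hk : n - m = k at hmn ⊢
  have hdes : ([m, k].sum - ·) '' {m - 2, m + k - 5, m + k - 2} = {2, 5, k + 2} := by
    ext i
    simp only [List.sum_cons, List.sum_nil, add_zero, Set.image_insert_eq, Set.image_singleton,
      Set.mem_insert_iff, Set.mem_singleton_iff]
    omega
  rw [← hdes]
  rcases (by omega : m + 2 ≤ k ∨ 5 ≤ m) with hk2 | hm5
  · exact not_fmfSCT_of_isStepCells (isStepCells_cellsA hm hmn) (isStepCells_cellsB hm hk2)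
      (s := m + k) (by omega) (by simp)
      (by simp (disch := omega) only [cellsA, cellsB, if_neg]; simp)
      (stepAscents_cellsA hm hmn) (stepAscents_cellsB hm hk2)
  · exact not_fmfSCT_of_isStepCells (isStepCells_cellsA hm hmn) (isStepCells_cellsC hm5 hmn)
      (s := m + k - 4) (by omega) (by simp)
      (by simp (disch := omega) only [cellsA, cellsC, if_pos, if_neg]; simp; omega)
      (stepAscents_cellsA hm hmn) (stepAscents_cellsC hm5 hmn)
end
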